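/- arXiv:2201.09727 — 2 statements merged into one kernel-verified Lean document; each statement's English description precedes it below -/
import Mathlib

section
/- Weighted ratio (Hoffman) bound: let X be a simple graph on a finite nonempty vertex set V and let A be a symmetric real matrix indexed by V such that A(u,v) = 0 whenever u and v are not adjacent in X (in particular every diagonal entry of A is 0), and such that every row of A sums to the same real number d. Let τ be the least eigenvalue of A and assume τ < 0 and τ < d. Then every independent set S of X satisfies |S| ≤ |V| / (1 − d/τ); equivalently, |S|·(d − τ) ≤ |V|·(−τ). -/
/-!
Since `τ` bounds the spectrum of the symmetric matrix `A` from below, `τ ‖y‖² ≤ yᵀAy` for every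
vector `y`. Take for `y` the component `n χ - |S| 𝟙` of `n χ` orthogonal to the all-ones vector
`𝟙`, where `χ` is the indicator of `S` and `n = |V|`. As `S` is independent, `χᵀAχ = 0`, and `A𝟙 = d𝟙`, so the
inequality reads `τ (n|S| - |S|²) ≤ -d |S|²`, which rearranges to the bound.
-/

open Matrix

namespace Matrix

variable {n : Type*} [Fintype n]

theorem IsHermitian.posSemidef_of_forall_eigenvalue_nonneg [DecidableEq n] {B : Matrix n n ℝ}
    (hB : B.IsHermitian) (h : ∀ μ : ℝ, (∃ x : n → ℝ, x ≠ 0 ∧ B *ᵥ x = μ • x) → 0 ≤ μ) :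
    B.PosSemidef :=
  hB.posSemidef_iff_eigenvalues_nonneg.mpr fun i =>
    h _ ⟨_, fun h0 => hB.eigenvectorBasis.orthonormal.ne_zero i (WithLp.ofLp_injective 2 h0),
      hB.mulVec_eigenvectorBasis i⟩

theorem IsSymm.mul_dotProduct_self_le {A : Matrix n n ℝ} (hA : A.IsSymm) {τ : ℝ}
    (hτ : ∀ μ : ℝ, (∃ x : n → ℝ, x ≠ 0 ∧ A *ᵥ x = μ • x) → τ ≤ μ) (x : n → ℝ) :
    τ * (x ⬝ᵥ x) ≤ x ⬝ᵥ A *ᵥ x := by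
  classical
  have hB : (A - τ • 1).IsHermitian :=
    isHermitian_iff_isSymm.mpr (hA.sub (isSymm_one.smul τ))
  have hpsd := hB.posSemidef_of_forall_eigenvalue_nonneg fun μ ⟨y, hy, hBy⟩ => by
    have hAy : A *ᵥ y = (μ + τ) • y := by
      rw [sub_mulVec, smul_mulVec, one_mulVec, sub_eq_iff_eq_add] at hBy
      rw [hBy, add_smul]
    linarith [hτ _ ⟨y, hy, hAy⟩]
  have := hpsd.dotProduct_mulVec_nonneg x
  simp only [star_trivial, sub_mulVec, smul_mulVec, one_mulVec, dotProduct_sub,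
    dotProduct_smul, smul_eq_mul] at this
  linarith

theorem IsSymm.mul_card_mul_dotProduct_self_sub_sq_le [Nonempty n] {A : Matrix n n ℝ}
    (hA : A.IsSymm) {d τ : ℝ} (hrow : A *ᵥ (fun _ => 1) = fun _ => d)
    (hτ : ∀ μ : ℝ, (∃ x : n → ℝ, x ≠ 0 ∧ A *ᵥ x = μ • x) → τ ≤ μ) (x : n → ℝ) :
    τ * (Fintype.card n * (x ⬝ᵥ x) - (x ⬝ᵥ 1) ^ 2) ≤
      Fintype.card n * (x ⬝ᵥ A *ᵥ x) - d * (x ⬝ᵥ 1) ^ 2 := by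
  set N : ℝ := (Fintype.card n : ℝ)
  set s := x ⬝ᵥ 1
  have hA1 : A *ᵥ 1 = d • 1 := by rw [Pi.one_def, hrow]; ext; simp
  have h1A : 1 ⬝ᵥ A *ᵥ x = d * s := by
    rw [dotProduct_mulVec, ← mulVec_transpose, hA.eq, hA1, smul_dotProduct, dotProduct_comm,
      smul_eq_mul]
  have hyy : (N • x - s • 1) ⬝ᵥ (N • x - s • 1) = N * (N * (x ⬝ᵥ x) - s ^ 2) := by
    simp only [sub_dotProduct, dotProduct_sub, smul_dotProduct, dotProduct_smul, smul_eq_mul,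
      one_dotProduct_one, dotProduct_comm 1 x]
    ring
  have hyAy : (N • x - s • 1) ⬝ᵥ A *ᵥ (N • x - s • 1) = N * (N * (x ⬝ᵥ A *ᵥ x) - d * s ^ 2) := by
    simp only [mulVec_sub, mulVec_smul, hA1, sub_dotProduct, dotProduct_sub, smul_dotProduct,
      dotProduct_smul, smul_eq_mul, h1A, one_dotProduct_one]
    ring
  have hN : 0 < N := Nat.cast_pos.mpr Fintype.card_pos
  have := hA.mul_dotProduct_self_le hτ (N • x - s • 1)
  rw [hyy, hyAy] at this
  nlinarith

end Matrix

section IndependentSet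

variable {V R : Type*} [Fintype V] [NonAssocSemiring R] (S : Finset V)

theorem indicator_one_dotProduct (v : V → R) :
    (S : Set V).indicator 1 ⬝ᵥ v = ∑ i ∈ S, v i := by
  classical
  simp [dotProduct, Set.indicator_apply, Finset.sum_ite_mem]

theorem indicator_one_dotProduct_mulVec_indicator_one_eq_zero {A : Matrix V V R}
    (h : ∀ u ∈ S, ∀ v ∈ S, A u v = 0) :
    (S : Set V).indicator 1 ⬝ᵥ A *ᵥ (S : Set V).indicator 1 = 0 := by
  classical
  simp only [dotProduct, mulVec, Set.indicator_apply, Finset.mem_coe, Pi.one_apply, mul_one,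
    ite_mul, one_mul, zero_mul, mul_ite, mul_zero, Finset.sum_ite_mem, Finset.univ_inter]
  exact Finset.sum_eq_zero fun u hu => Finset.sum_eq_zero fun v hv => h u hu v hv

end IndependentSet

theorem stmt_5_general {V : Type*} [Fintype V]
    (X : SimpleGraph V) (A : Matrix V V ℝ) (d τ : ℝ)
    (hsymm : A.IsSymm)
    (hzero : ∀ u v : V, ¬ X.Adj u v → A u v = 0)
    (hrow : A.mulVec (fun _ => 1) = fun _ => d)
    (hτ_least : ∀ μ : ℝ, (∃ x : V → ℝ, x ≠ 0 ∧ A.mulVec x = μ • x) → τ ≤ μ)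
    (hτneg : τ < 0)
    (S : Finset V) (hS : ∀ u ∈ S, ∀ v ∈ S, ¬ X.Adj u v) :
    (S.card : ℝ) * (d - τ) ≤ (Fintype.card V : ℝ) * (-τ) := by
  obtain rfl | hS₀ := S.eq_empty_or_nonempty
  · simpa using mul_nonneg (Nat.cast_nonneg _) (neg_nonneg.mpr hτneg.le)
  have : Nonempty V := hS₀.coe_sort.map Subtype.val
  have key := hsymm.mul_card_mul_dotProduct_self_sub_sq_le hrow hτ_least ((S : Set V).indicator 1)
  have hχχ : (S : Set V).indicator 1 ⬝ᵥ (S : Set V).indicator 1 = (S.card : ℝ) := by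
    rw [indicator_one_dotProduct,
      Finset.sum_congr rfl fun i hi => Set.indicator_of_mem (Finset.mem_coe.mpr hi) 1]
    simp
  have hχ1 : (S : Set V).indicator 1 ⬝ᵥ (1 : V → ℝ) = (S.card : ℝ) := by
    simp [indicator_one_dotProduct]
  rw [hχχ, hχ1, indicator_one_dotProduct_mulVec_indicator_one_eq_zero S
    fun u hu v hv => hzero u v (hS u hu v hv)] at key
  have hs : (0 : ℝ) < S.card := by exact_mod_cast hS₀.card_pos
  nlinarith

/-- Weighted ratio (Hoffman) bound: if `A` is a symmetric real weighted adjacency matrix of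
a graph `X` with constant row sum `d` and least eigenvalue `τ < 0`, `τ < d`, then every
independent set `S` of `X` satisfies `|S| * (d - τ) ≤ |V| * (-τ)`. -/
theorem stmt_5 {V : Type*} [Fintype V] [Nonempty V]
    (X : SimpleGraph V) (A : Matrix V V ℝ) (d τ : ℝ)
    (hsymm : A.IsSymm)
    (hzero : ∀ u v : V, ¬ X.Adj u v → A u v = 0)
    (hrow : A.mulVec (fun _ => 1) = fun _ => d)
    (hτ_eig : ∃ x : V → ℝ, x ≠ 0 ∧ A.mulVec x = τ • x)
    (hτ_least : ∀ μ : ℝ, (∃ x : V → ℝ, x ≠ 0 ∧ A.mulVec x = μ • x) → τ ≤ μ)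
    (hτneg : τ < 0) (hτd : τ < d)
    (S : Finset V) (hS : ∀ u ∈ S, ∀ v ∈ S, ¬ X.Adj u v) :
    (S.card : ℝ) * (d - τ) ≤ (Fintype.card V : ℝ) * (-τ) :=
  stmt_5_general X A d τ hsymm hzero hrow hτ_least hτneg S hS
end

section
/- Eigenvalues of conjugacy-class weighted Cayley matrices: let G be a finite group and f : G → ℂ a class function, i.e., f(g h g⁻¹) = f(h) for all g, h ∈ G. Let A be the G × G complex matrix with entries A(g,h) = f(h g⁻¹). Then for every irreducible finite-dimensional complex character χ of G, the complex number (1/χ(1)) · Σ_{g ∈ G} f(g) χ(g) is an eigenvalue of A. -/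
/-!
For a class function `f`, the operator `T = ∑ u, f u • ρ u` on an irreducible representation `ρ`
commutes with every `ρ g`, so by Schur's lemma it is a scalar `c`. Taking traces of `T ∘ ρ g`
gives `∑ u, f u * χ (u * g) = c * χ g` for all `g`; this says exactly that the character `χ` is an
eigenvector of `A` with eigenvalue `c`, and `g = 1` identifies `c` as `χ(1)⁻¹ * ∑ g, f g * χ g`.
-/

open CategoryTheory Module

namespace Representation

variable {k G V : Type*} [Group G] [Fintype G]

section CommSemiring

variable [CommSemiring k] [AddCommMonoid V] [Module k V] (ρ : Representation k G V)

def sumSmul (f : G → k) : Module.End k V := ∑ g, f g • ρ g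

theorem commute_sumSmul {f : G → k} (hf : ∀ g h : G, f (g * h * g⁻¹) = f h) (g : G) :
    Commute (ρ g) (ρ.sumSmul f) := by
  simp only [Commute, SemiconjBy, sumSmul, Finset.mul_sum, Finset.sum_mul, mul_smul_comm,
    smul_mul_assoc, ← map_mul]
  refine Fintype.sum_equiv (MulAut.conj g).toEquiv _ _ fun u => ?_
  simp only [MulEquiv.toEquiv_eq_coe, MulEquiv.coe_toEquiv, MulAut.conj_apply, hf,
    inv_mul_cancel_right]

end CommSemiring

theorem trace_sumSmul_mul [Field k] [AddCommGroup V] [Module k V] (ρ : Representation k G V)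
    (f : G → k) (g : G) :
    LinearMap.trace k V (ρ.sumSmul f * ρ g) = ∑ u, f u * ρ.character (u * g) := by
  simp [sumSmul, Finset.sum_mul, character, ← map_mul]

end Representation

namespace FDRep

variable {k G : Type} [Field k] [Group G] (V : FDRep k G)

theorem finrank_ne_zero_of_simple [Simple V] : finrank k V ≠ 0 := by
  intro h
  have : Subsingleton V := finrank_zero_iff.mp h
  exact id_nonzero V <| Action.Hom.ext <|
    FGModuleCat.hom_ext <| LinearMap.ext fun _ => Subsingleton.elim _ _

variable [Fintype G]

theorem exists_sumSmul_eq_smul_one [IsAlgClosed k] [Simple V] {f : G → k}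
    (hf : ∀ g h : G, f (g * h * g⁻¹) = f h) :
    ∃ c : k, Representation.sumSmul V.ρ f = c • 1 := by
  let T : V ⟶ V := ⟨FGModuleCat.ofHom (Representation.sumSmul V.ρ f),
    fun g => FGModuleCat.hom_ext (Representation.commute_sumSmul V.ρ hf g).eq.symm⟩
  obtain ⟨c, hc⟩ := endomorphism_simple_eq_smul_id k T
  exact ⟨c, congrArg (fun φ : V ⟶ V => φ.hom.hom.hom) hc.symm⟩

theorem sum_mul_character_mul {f : G → k} {c : k}
    (hc : Representation.sumSmul V.ρ f = c • 1) (g : G) :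
    ∑ u, f u * V.character (u * g) = c * V.character g := by
  have := Representation.trace_sumSmul_mul V.ρ f g
  rw [hc, smul_mul_assoc, one_mul, map_smul] at this
  exact this.symm

end FDRep

theorem Matrix.hasEigenvector_toLin'_of_sum_mul_mul_right {k G : Type*} [Field k] [Group G]
    [Fintype G] [DecidableEq G] {f : G → k} {A : Matrix G G k}
    (hA : ∀ g h : G, A g h = f (h * g⁻¹)) {ψ : G → k} {c : k}
    (hψ : ∀ g, ∑ u, f u * ψ (u * g) = c * ψ g) (hψ0 : ψ ≠ 0) :
    End.HasEigenvector (Matrix.toLin' A) c ψ := by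
  refine ⟨End.mem_eigenspace_iff.mpr (funext fun g => ?_), hψ0⟩
  rw [Matrix.toLin'_apply, Pi.smul_apply, smul_eq_mul, ← hψ g]
  simp only [Matrix.mulVec, dotProduct, hA]
  exact Fintype.sum_equiv (Equiv.mulRight g⁻¹) _ _ fun u => by simp [mul_assoc]

/-- For a class function `f` on a finite group `G` and the matrix `A(g,h) = f(h g⁻¹)`,
every irreducible complex character `χ` of `G` yields an eigenvalue
`(1/χ(1)) * ∑_{g} f(g) χ(g)` of `A`. -/
theorem stmt_6 {G : Type} [Group G] [Fintype G] [DecidableEq G]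
    (f : G → ℂ) (hf : ∀ g h : G, f (g * h * g⁻¹) = f h)
    (A : Matrix G G ℂ) (hA : ∀ g h : G, A g h = f (h * g⁻¹))
    (V : FDRep ℂ G) (hV : CategoryTheory.Simple V) :
    Module.End.HasEigenvalue (Matrix.toLin' A)
      ((V.character 1)⁻¹ * ∑ g : G, f g * V.character g) := by
  have hdim : V.character 1 ≠ 0 := by
    rw [FDRep.char_one]
    exact_mod_cast V.finrank_ne_zero_of_simple
  obtain ⟨c, hc⟩ := V.exists_sumSmul_eq_smul_one hf
  have hχ := V.sum_mul_character_mul hc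
  have hc_eq : (V.character 1)⁻¹ * ∑ g, f g * V.character g = c := by
    simpa only [mul_one, inv_mul_eq_iff_eq_mul₀ hdim, mul_comm c] using hχ 1
  rw [hc_eq]
  exact End.hasEigenvalue_of_hasEigenvector <|
    Matrix.hasEigenvector_toLin'_of_sum_mul_mul_right hA hχ fun h => hdim (congrFun h 1)
end
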